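/- arXiv:2202.01511 — 2 statements merged into one kernel-verified Lean document; each statement's English description precedes it below -/
import Mathlib

section
/- For an L-Lipschitz function F on Δ(S) with respect to the ℓ¹ norm, and any two policies π†, π⋆, the approximation error satisfies |ζ_n(π†) − ζ_n(π⋆)| ≤ 2L · max over π ∈ {π†, π⋆} of E_{d_n ∼ p_n^π}[‖d_n − d^π‖₁], where π† maximizes ζ_n and π⋆ maximizes ζ_∞. -/
open Finset

lemma mean_mem_simplex {S D : Type*} [Fintype S] [Fintype D]
    (w : D → ℝ) (hw0 : ∀ i, 0 ≤ w i) (hw1 : ∑ i, w i = 1)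
    (d : D → S → ℝ) (hd : ∀ i, d i ∈ stdSimplex ℝ S) :
    (fun s => ∑ i, w i * d i s) ∈ stdSimplex ℝ S := by
  constructor
  · intro s
    exact Finset.sum_nonneg fun i _ => mul_nonneg (hw0 i) ((hd i).1 s)
  · rw [Finset.sum_comm]
    calc ∑ i, ∑ s, w i * d i s = ∑ i, w i * ∑ s, d i s := by
          simp [Finset.mul_sum]
      _ = 1 := by simp only [fun i => (hd i).2, mul_one, hw1]

lemma zeta_close {S D : Type*} [Fintype S] [Fintype D]
    (L : ℝ) (F : (S → ℝ) → ℝ)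
    (hF : ∀ x ∈ stdSimplex ℝ S, ∀ y ∈ stdSimplex ℝ S,
      |F x - F y| ≤ L * ∑ s, |x s - y s|)
    (w : D → ℝ) (hw0 : ∀ i, 0 ≤ w i) (hw1 : ∑ i, w i = 1)
    (d : D → S → ℝ) (hd : ∀ i, d i ∈ stdSimplex ℝ S) :
    |(∑ i, w i * F (d i)) - F (fun s => ∑ j, w j * d j s)| ≤
      L * ∑ i, w i * ∑ s, |d i s - ∑ j, w j * d j s| := by
  have hmean := mean_mem_simplex w hw0 hw1 d hd
  have h1 : (∑ i, w i * F (d i)) - F (fun s => ∑ j, w j * d j s)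
      = ∑ i, w i * (F (d i) - F (fun s => ∑ j, w j * d j s)) := by
    simp only [mul_sub, Finset.sum_sub_distrib, ← Finset.sum_mul, hw1, one_mul]
  rw [h1, Finset.mul_sum]
  refine (Finset.abs_sum_le_sum_abs _ _).trans (Finset.sum_le_sum fun i _ => ?_)
  rw [abs_mul, abs_of_nonneg (hw0 i), mul_left_comm]
  exact mul_le_mul_of_nonneg_left (hF _ (hd i) _ hmean) (hw0 i)

/-- For an `L`-Lipschitz (in ℓ¹ norm) function `F` on the simplex, with each policy `π`
inducing a finitely-supported distribution (weights `w π`, values `d π i ∈ Δ(S)`),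
`ζ_n(π) = E[F(d_n)]` and `ζ_∞(π) = F(d^π)` with `d^π = E[d_n]`, if `π†` maximizes `ζ_n` and
`π⋆` maximizes `ζ_∞`, then
`|ζ_n(π†) − ζ_n(π⋆)| ≤ 2L · max_{π ∈ {π†,π⋆}} E[‖d_n − d^π‖₁]`. -/
theorem approx_error_le_expected_deviation
    {S D P : Type*} [Fintype S] [Fintype D]
    (L : ℝ) (hL : 0 ≤ L) (F : (S → ℝ) → ℝ)
    (hF : ∀ x ∈ stdSimplex ℝ S, ∀ y ∈ stdSimplex ℝ S,
      |F x - F y| ≤ L * ∑ s, |x s - y s|)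
    (w : P → D → ℝ) (hw0 : ∀ π i, 0 ≤ w π i) (hw1 : ∀ π, ∑ i, w π i = 1)
    (d : P → D → S → ℝ) (hd : ∀ π i, d π i ∈ stdSimplex ℝ S)
    (πd πs : P)
    (hπd : ∀ π : P, ∑ i, w π i * F (d π i) ≤ ∑ i, w πd i * F (d πd i))
    (hπs : ∀ π : P, F (fun s => ∑ i, w π i * d π i s) ≤ F (fun s => ∑ i, w πs i * d πs i s)) :
    |(∑ i, w πd i * F (d πd i)) - ∑ i, w πs i * F (d πs i)| ≤
      2 * L * max
        (∑ i, w πd i * ∑ s, |d πd i s - ∑ j, w πd j * d πd j s|)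
        (∑ i, w πs i * ∑ s, |d πs i s - ∑ j, w πs j * d πs j s|) := by
  set Ed := ∑ i, w πd i * ∑ s, |d πd i s - ∑ j, w πd j * d πd j s| with hEd
  set Es := ∑ i, w πs i * ∑ s, |d πs i s - ∑ j, w πs j * d πs j s| with hEs
  have cd := zeta_close L F hF (w πd) (hw0 πd) (hw1 πd) (d πd) (hd πd)
  have cs := zeta_close L F hF (w πs) (hw0 πs) (hw1 πs) (d πs) (hd πs)
  have hnn : 0 ≤ (∑ i, w πd i * F (d πd i)) - ∑ i, w πs i * F (d πs i) :=
    sub_nonneg.2 (hπd πs)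
  rw [abs_of_nonneg hnn]
  have hinf : F (fun s => ∑ j, w πd j * d πd j s) ≤ F (fun s => ∑ j, w πs j * d πs j s) :=
    hπs πd
  have h1 : (∑ i, w πd i * F (d πd i)) ≤ F (fun s => ∑ j, w πd j * d πd j s) + L * Ed := by
    have := abs_le.1 cd
    linarith [this.2]
  have h2 : F (fun s => ∑ j, w πs j * d πs j s) - L * Es ≤ ∑ i, w πs i * F (d πs i) := by
    have := abs_le.1 cs
    linarith [this.1]
  have hmax : Ed ≤ max Ed Es := le_max_left _ _
  have hmax2 : Es ≤ max Ed Es := le_max_right _ _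
  nlinarith [mul_le_mul_of_nonneg_left hmax hL, mul_le_mul_of_nonneg_left hmax2 hL]
end

section
/- Equivalence of the extended MDP linear objective and the single trial convex objective: for the extended MDP with state space the set of histories of length at most T and reward r_ℓ(s_ℓ) = F(d_{s_ℓ}) if |s_ℓ| = T and 0 otherwise, the linear objective r_ℓ · d^π over the extended MDP equals E_{d ∼ p^π}[F(d)], the single trial convex objective. -/
open Finset

/-- Equivalence of the extended MDP linear objective and the single trial convex objective.
Extended states are histories of length `1, …, T`, encoded as a pair `(t, h)` where `h` is a
full length-`T` state-action trajectory and `t : Fin T` indicates the history is its prefix of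
length `t+1`. The extended reward is `rℓ (t, h) = F(d_h)` if the history is full
(`t = T − 1`), where `d_h` is the empirical state distribution of `h`, and `0` otherwise.
If the extended state distribution `dπ` agrees on full histories with the trajectory
probability `pπ` of the policy, then the extended linear objective `rℓ · dπ` equals the
single trial convex objective `E_{d ∼ p^π}[F(d)]`. -/
theorem extended_mdp_linear_eq_single_trial_convex
    {S A : Type*} [Fintype S] [Fintype A] [DecidableEq S] (T : ℕ) [NeZero T]
    (F : (S → ℝ) → ℝ)
    (pπ : (Fin T → S × A) → ℝ)
    (dπ : Fin T × (Fin T → S × A) → ℝ)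
    (rℓ : Fin T × (Fin T → S × A) → ℝ)
    (hr : ∀ (t : Fin T) (h : Fin T → S × A),
      rℓ (t, h) = if (t : ℕ) = T - 1 then
        F (fun s => (T : ℝ)⁻¹ * ∑ i, if (h i).1 = s then 1 else 0) else 0)
    (hd : ∀ h : Fin T → S × A,
      dπ (⟨T - 1, Nat.sub_lt (NeZero.pos T) one_pos⟩, h) = pπ h) :
    ∑ e : Fin T × (Fin T → S × A), rℓ e * dπ e =
      ∑ h : Fin T → S × A,
        pπ h * F (fun s => (T : ℝ)⁻¹ * ∑ i, if (h i).1 = s then 1 else 0) := by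
  rw [Fintype.sum_prod_type]
  rw [Finset.sum_eq_single (⟨T - 1, Nat.sub_lt (NeZero.pos T) one_pos⟩ : Fin T)]
  · apply Finset.sum_congr rfl
    intro h _
    rw [hr, hd, if_pos rfl, mul_comm]
  · intro t _ ht
    apply Finset.sum_eq_zero
    intro h _
    rw [hr, if_neg, zero_mul]
    intro he
    exact ht (Fin.ext he)
  · intro h
    exact absurd (Finset.mem_univ _) h
end
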